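/- Let k be a field, R a Noetherian k-algebra, and q a nonzero element of k, regarded as the central element q·1 of R. Let (σ, δ) be a q-skew derivation on R. Assume either that q is not a root of unity in k, or that k has characteristic 0 and q = 1. Then δ(N) ⊆ N, where N is the prime radical of R, i.e. its largest nilpotent two-sided ideal. -/

import Mathlib

/-!
Both `σ` and `σ⁻¹` carry nilpotent ideals to nilpotent ideals, so they preserve the largest one,
`N`; this makes `J = N + δ(N)` a two-sided ideal. Say `N^m = 0`. Modulo `N`, a product of `m`
elements of `J` is a product `δ(x₁)⋯δ(x_m)` with `xᵢ ∈ N`, which after moving powers of `σ` across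
`δ` is `q^w σ^(m-1)(δ y₁)⋯δ(y_m)` with `yᵢ ∈ N`. In the `q`-Leibniz expansion of
`δ^m(y₁⋯y_m) = δ^m(0) = 0` every term except this one has a factor in `N`, and its coefficient is
the `q`-factorial `[m]_q!`, which is nonzero by the assumption on `q`. Hence `J^m ⊆ N`, so `J` is
nilpotent and `J ⊆ N`.
-/

open Finset

section QNumbers

variable {k : Type*} [CommRing k] (q : k)

def qBinomial : ℕ → ℕ → k
  | _, 0 => 1
  | 0, _ + 1 => 0
  | n + 1, i + 1 => q ^ (i + 1) * qBinomial n (i + 1) + qBinomial n i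

def qFactorial : ℕ → k
  | 0 => 1
  | n + 1 => (∑ i ∈ range (n + 1), q ^ i) * qFactorial n

theorem qBinomial_eq_zero_of_lt {n i : ℕ} (h : n < i) : qBinomial q n i = 0 := by
  induction n generalizing i with
  | zero => obtain ⟨i, rfl⟩ := Nat.exists_eq_add_one.2 h; rfl
  | succ n ih =>
    obtain ⟨i, rfl⟩ := Nat.exists_eq_add_one.2 (Nat.zero_lt_of_lt h)
    simp only [qBinomial, ih (by omega : n < i + 1), ih (by omega : n < i), mul_zero, add_zero]

@[simp]
theorem qBinomial_self (n : ℕ) : qBinomial q n n = 1 := by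
  induction n with
  | zero => rfl
  | succ n ih =>
    simp only [qBinomial, qBinomial_eq_zero_of_lt q n.lt_add_one, ih, mul_zero, zero_add]

theorem qBinomial_succ_self (n : ℕ) : qBinomial q (n + 1) n = ∑ i ∈ range (n + 1), q ^ i := by
  induction n with
  | zero => simp [qBinomial]
  | succ n ih => rw [qBinomial, qBinomial_self, ih, sum_range_succ _ (n + 1), mul_one, add_comm]

theorem qFactorial_ne_zero [IsDomain k] (hq : ∀ n, ∑ i ∈ range (n + 1), q ^ i ≠ 0) (n : ℕ) :
    qFactorial q n ≠ 0 := by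
  induction n with
  | zero => exact one_ne_zero
  | succ n ih => exact mul_ne_zero (hq n) ih

end QNumbers

theorem geom_sum_succ_ne_zero {k : Type*} [Field k] {q : k}
    (hq : (¬ ∃ m : ℕ, 0 < m ∧ q ^ m = 1) ∨ (CharZero k ∧ q = 1)) (n : ℕ) :
    ∑ i ∈ range (n + 1), q ^ i ≠ 0 := by
  rcases hq with hq | ⟨_, rfl⟩
  · intro h
    refine hq ⟨n + 1, n.succ_pos, ?_⟩
    rw [← sub_eq_zero, ← geom_sum_mul, h, zero_mul]
  · simpa using n.cast_add_one_ne_zero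

namespace TwoSidedIdeal

variable {R : Type*} [Ring R]

theorem mkₐ_eq_zero_iff (k : Type*) [CommRing k] [Algebra k R] (N : TwoSidedIdeal R) {x : R} :
    N.ringCon.mkₐ k x = 0 ↔ x ∈ N := by
  rw [RingCon.mkₐ_apply, ← RingCon.coe_zero, RingCon.eq, ← mem_iff]

def PowEqZero (J : TwoSidedIdeal R) (m : ℕ) : Prop :=
  ∀ l : List R, l.length = m → (∀ y ∈ l, y ∈ J) → l.prod = 0

theorem PowEqZero.comap {S : Type*} [Ring S] {I : TwoSidedIdeal S} {m : ℕ} (hI : I.PowEqZero m)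
    {f : R →+* S} (hf : Function.Injective f) : (I.comap f).PowEqZero m := by
  intro l hl hmem
  apply hf
  rw [map_zero, map_list_prod]
  exact hI _ (by rw [List.length_map, hl]) (by simpa [mem_comap] using hmem)

theorem PowEqZero.mul {J N : TwoSidedIdeal R} {m c : ℕ}
    (hJ : ∀ l : List R, l.length = m → (∀ z ∈ l, z ∈ J) → l.prod ∈ N) (hN : N.PowEqZero c) :
    J.PowEqZero (m * c) := by
  suffices ∀ l : List R, l.length = m * c → (∀ z ∈ l, z ∈ J) →
      ∃ ln : List R, ln.length = c ∧ (∀ y ∈ ln, y ∈ N) ∧ l.prod = ln.prod by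
    intro l hl hmem
    obtain ⟨ln, hlen, hlnN, hprod⟩ := this l hl hmem
    rw [hprod, hN ln hlen hlnN]
  clear hN
  induction c with
  | zero =>
    intro l hl _
    rw [List.eq_nil_of_length_eq_zero hl]
    exact ⟨[], rfl, by simp, rfl⟩
  | succ c ih =>
    intro l hl hmem
    obtain ⟨ln, hlen, hlnN, hprod⟩ := ih (l.drop m) (by rw [List.length_drop, hl]; ring_nf; omega)
      (fun z hz ↦ hmem z (List.mem_of_mem_drop hz))
    refine ⟨(l.take m).prod :: ln, by rw [List.length_cons, hlen], ?_, ?_⟩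
    · refine List.forall_mem_cons.2 ⟨hJ _ ?_ (fun z hz ↦ hmem z (List.mem_of_mem_take hz)), hlnN⟩
      rw [List.length_take, hl]
      exact min_eq_left (Nat.le_mul_of_pos_right m c.succ_pos)
    · rw [List.prod_cons, ← hprod, ← List.prod_append, List.take_append_drop]

theorem map_mem_of_forall_powEqZero_le {N : TwoSidedIdeal R} {m : ℕ} (hm : 0 < m)
    (hN : N.PowEqZero m) (hmax : ∀ (J : TwoSidedIdeal R) (m : ℕ), 0 < m → J.PowEqZero m → J ≤ N)
    (e : R ≃+* R) {x : R} (hx : x ∈ N) : e x ∈ N :=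
  hmax _ m hm (hN.comap (f := e.symm.toRingHom) e.symm.injective) (by simpa [mem_comap] using hx)

end TwoSidedIdeal

/-- `σ^(n-1)(δ y₁) σ^(n-2)(δ y₂) ⋯ δ(y_n)`: the term, with coefficient `[n]_q!`, of the
`q`-Leibniz expansion of `δ^n(y₁⋯y_n)` in which `δ` hits every factor exactly once. -/
def twistedProd {R : Type*} [Ring R] (σ : R →+* R) (δ : R →+ R) : List R → R
  | [] => 1
  | a :: t => σ^[t.length] (δ a) * twistedProd σ δ t

structure IsQSkewDerivation {k R : Type*} [CommRing k] [Ring R] [Algebra k R]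
    (q : k) (σ : R →+* R) (δ : R →+ R) : Prop where
  leibniz : ∀ a b, δ (a * b) = δ a * b + σ a * δ b
  map_σ_apply : ∀ x, δ (σ x) = q • σ (δ x)
  σ_algebraMap_q : σ (algebraMap k R q) = algebraMap k R q
  δ_algebraMap_q : δ (algebraMap k R q) = 0

namespace IsQSkewDerivation

variable {k R : Type*} [CommRing k] [Ring R] [Algebra k R] {q : k} {σ : R →+* R} {δ : R →+ R}
  (h : IsQSkewDerivation q σ δ)
include h

def constants : Subring k where
  carrier := {c | σ (algebraMap k R c) = algebraMap k R c ∧ δ (algebraMap k R c) = 0}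
  one_mem' := by
    have h1 : δ 1 = 0 := by simpa using h.leibniz 1 1
    simp [h1]
  mul_mem' := by
    rintro a b ⟨hσa, hδa⟩ ⟨hσb, hδb⟩
    simp only [Set.mem_ofPred_eq, _root_.map_mul, h.leibniz, hσa, hσb, hδa, hδb, zero_mul, mul_zero,
      add_zero, and_self]
  zero_mem' := by simp
  add_mem' := by
    rintro a b ⟨hσa, hδa⟩ ⟨hσb, hδb⟩
    simp only [Set.mem_ofPred_eq, map_add, hσa, hσb, hδa, hδb, add_zero, and_self]
  neg_mem' := by
    rintro a ⟨hσa, hδa⟩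
    simp only [Set.mem_ofPred_eq, map_neg, hσa, hδa, neg_zero, and_self]

theorem q_mem_constants : q ∈ h.constants := ⟨h.σ_algebraMap_q, h.δ_algebraMap_q⟩

theorem qBinomial_mem_constants (n i : ℕ) : qBinomial q n i ∈ h.constants := by
  induction n generalizing i with
  | zero => cases i <;> simp [qBinomial]
  | succ n ih =>
    cases i with
    | zero => exact Subring.one_mem _
    | succ i => exact add_mem (mul_mem (pow_mem h.q_mem_constants _) (ih _)) (ih _)

theorem σ_smul_of_mem_constants {c : k} (hc : c ∈ h.constants) (x : R) : σ (c • x) = c • σ x := by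
  rw [Algebra.smul_def, _root_.map_mul, hc.1, Algebra.smul_def]

theorem map_smul_of_mem_constants {c : k} (hc : c ∈ h.constants) (x : R) : δ (c • x) = c • δ x := by
  rw [Algebra.smul_def, h.leibniz, hc.1, hc.2, zero_mul, zero_add, Algebra.smul_def]

theorem map_iterate_σ (i : ℕ) (x : R) : δ (σ^[i] x) = q ^ i • σ^[i] (δ x) := by
  induction i with
  | zero => simp
  | succ i ih =>
    rw [Function.iterate_succ_apply', h.map_σ_apply, ih,
      h.σ_smul_of_mem_constants (pow_mem h.q_mem_constants i), smul_smul, ← pow_succ',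
      Function.iterate_succ_apply']

theorem iterate_map_mul (n : ℕ) (a b : R) :
    δ^[n] (a * b) = ∑ i ∈ range (n + 1), qBinomial q n i • (σ^[i] (δ^[n - i] a) * δ^[i] b) := by
  induction n with
  | zero => simp [qBinomial]
  | succ n ih =>
    set T : ℕ → R := fun i ↦ σ^[i] (δ^[n + 1 - i] a) * δ^[i] b with hT
    have hterm : ∀ i ∈ range (n + 1), δ (qBinomial q n i • (σ^[i] (δ^[n - i] a) * δ^[i] b)) =
        (q ^ i * qBinomial q n i) • T i + qBinomial q n i • T (i + 1) := by
      intro i hi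
      have hin : n + 1 - i = n - i + 1 := by have := mem_range.1 hi; omega
      rw [h.map_smul_of_mem_constants (h.qBinomial_mem_constants n i), h.leibniz,
        h.map_iterate_σ, hT]
      simp only [hin, Nat.add_sub_add_right, Function.iterate_succ_apply', smul_add, smul_mul_assoc,
        smul_smul, mul_comm]
    have hshift : ∑ i ∈ range (n + 1), (q ^ (i + 1) * qBinomial q n (i + 1)) • T (i + 1) + T 0 =
        ∑ i ∈ range (n + 1), (q ^ i * qBinomial q n i) • T i := by
      have hsum := sum_range_succ' (fun i ↦ (q ^ i * qBinomial q n i) • T i) (n + 1)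
      rw [sum_range_succ, qBinomial_eq_zero_of_lt q n.lt_add_one, mul_zero, zero_smul,
        add_zero] at hsum
      simpa [qBinomial] using hsum.symm
    rw [Function.iterate_succ_apply', ih, map_sum, sum_congr rfl hterm, sum_add_distrib,
      ← hshift, sum_range_succ' _ (n + 1)]
    simp only [qBinomial, add_smul, sum_add_distrib, one_smul, hT, Nat.sub_zero]
    abel

variable {N : TwoSidedIdeal R}

theorem iterate_map_prod_mem (hN : Set.MapsTo σ N N) {t : List R} (ht : ∀ y ∈ t, y ∈ N) {i : ℕ}
    (hi : i < t.length) : δ^[i] t.prod ∈ N := by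
  induction t generalizing i with
  | nil => exact absurd hi (Nat.not_lt_zero i)
  | cons a t ih =>
    rw [List.forall_mem_cons] at ht
    rw [List.prod_cons, h.iterate_map_mul]
    refine sum_mem fun r hr ↦ ?_
    rw [Algebra.smul_def]
    refine N.mul_mem_left _ _ ?_
    rcases lt_or_ge r t.length with hrt | hrt
    · exact N.mul_mem_left _ _ (ih ht.2 hrt)
    · rw [List.length_cons] at hi
      rw [show i - r = 0 by have := mem_range.1 hr; omega, Function.iterate_zero_apply]
      exact N.mul_mem_right _ _ (hN.iterate r ht.1)

theorem mkₐ_iterate_map_prod (hN : Set.MapsTo σ N N) {t : List R} (ht : ∀ y ∈ t, y ∈ N) :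
    N.ringCon.mkₐ k (δ^[t.length] t.prod) =
      qFactorial q t.length • N.ringCon.mkₐ k (twistedProd σ δ t) := by
  induction t with
  | nil => simp [qFactorial, twistedProd]
  | cons a t ih =>
    rw [List.forall_mem_cons] at ht
    set π := N.ringCon.mkₐ k
    have hlow : ∑ r ∈ range t.length,
        π (qBinomial q (t.length + 1) r • (σ^[r] (δ^[t.length + 1 - r] a) * δ^[r] t.prod)) = 0 :=
      sum_eq_zero fun r hr ↦ by
        rw [map_smul, map_mul, (TwoSidedIdeal.mkₐ_eq_zero_iff k N).2
          (h.iterate_map_prod_mem hN ht.2 (mem_range.1 hr)), mul_zero, smul_zero]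
    have htop : π (qBinomial q (t.length + 1) (t.length + 1) • (σ^[t.length + 1]
        (δ^[t.length + 1 - (t.length + 1)] a) * δ^[t.length + 1] t.prod)) = 0 := by
      rw [Nat.sub_self, Function.iterate_zero_apply, map_smul, map_mul,
        (TwoSidedIdeal.mkₐ_eq_zero_iff k N).2 (hN.iterate _ ht.1), zero_mul, smul_zero]
    rw [List.prod_cons, List.length_cons, h.iterate_map_mul, sum_range_succ, sum_range_succ,
      map_add, map_add, map_sum, hlow, htop, zero_add, add_zero, map_smul, map_mul,
      Nat.add_sub_cancel_left, Function.iterate_one, ih ht.2, qBinomial_succ_self, qFactorial,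
      twistedProd, map_mul, mul_smul_comm, smul_smul]

theorem twistedProd_mem (hN : Set.MapsTo σ N N) {t : List R} (ht : ∀ y ∈ t, y ∈ N)
    (hNt : N.PowEqZero t.length) (hq : IsUnit (qFactorial q t.length)) :
    twistedProd σ δ t ∈ N := by
  rw [← TwoSidedIdeal.mkₐ_eq_zero_iff k]
  have := h.mkₐ_iterate_map_prod hN ht
  rwa [hNt t rfl ht, iterate_map_zero, map_zero, eq_comm, hq.smul_eq_zero] at this

theorem exists_prod_map_eq_smul_twistedProd (hN : Set.SurjOn σ N N) {l : List R}
    (hl : ∀ x ∈ l, x ∈ N) : ∃ l' : List R, l'.length = l.length ∧ (∀ y ∈ l', y ∈ N) ∧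
      ∃ w : ℕ, (l.map δ).prod = q ^ w • twistedProd σ δ l' := by
  induction l with
  | nil => exact ⟨[], rfl, by simp, 0, by simp [twistedProd]⟩
  | cons x t ih =>
    rw [List.forall_mem_cons] at hl
    obtain ⟨l', hlen, hl'N, w, hw⟩ := ih hl.2
    obtain ⟨y, hy, rfl⟩ := hN.iterate t.length hl.1
    refine ⟨y :: l', by rw [List.length_cons, List.length_cons, hlen],
      List.forall_mem_cons.2 ⟨hy, hl'N⟩, t.length + w, ?_⟩
    rw [List.map_cons, List.prod_cons, hw, h.map_iterate_σ, twistedProd, hlen,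
      smul_mul_smul_comm, pow_add]

def addImage (hσ : Function.Surjective σ) (hN : Set.MapsTo σ N N) : TwoSidedIdeal R :=
  .mk' {z | ∃ x ∈ N, z - δ x ∈ N} ⟨0, N.zero_mem, by simp⟩
    (by
      rintro z z' ⟨x, hx, hz⟩ ⟨x', hx', hz'⟩
      exact ⟨x + x', N.add_mem hx hx', by simpa [add_sub_add_comm] using N.add_mem hz hz'⟩)
    (by
      rintro z ⟨x, hx, hz⟩
      exact ⟨-x, N.neg_mem hx, by simpa [neg_add_eq_sub] using N.neg_mem hz⟩)
    (by
      rintro r z ⟨x, hx, hz⟩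
      obtain ⟨r, rfl⟩ := hσ r
      refine ⟨r * x, N.mul_mem_left _ _ hx, ?_⟩
      rw [h.leibniz,
        show σ r * z - (δ r * x + σ r * δ x) = σ r * (z - δ x) - δ r * x by noncomm_ring]
      exact N.sub_mem (N.mul_mem_left _ _ hz) (N.mul_mem_left _ _ hx))
    (by
      rintro z r ⟨x, hx, hz⟩
      refine ⟨x * r, N.mul_mem_right _ _ hx, ?_⟩
      rw [h.leibniz,
        show z * r - (δ x * r + σ x * δ r) = (z - δ x) * r - σ x * δ r by noncomm_ring]
      exact N.sub_mem (N.mul_mem_right _ _ hz) (N.mul_mem_right _ _ (hN hx)))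

theorem mem_addImage (hσ : Function.Surjective σ) (hN : Set.MapsTo σ N N) {z : R} :
    z ∈ h.addImage hσ hN ↔ ∃ x ∈ N, z - δ x ∈ N :=
  TwoSidedIdeal.mem_mk' ..

theorem prod_mem_of_mem_addImage (hσ : Function.Surjective σ) (hN : Set.MapsTo σ N N)
    (hN' : Set.SurjOn σ N N) {m : ℕ} (hNm : N.PowEqZero m) (hq : IsUnit (qFactorial q m))
    {l : List R} (hlen : l.length = m) (hl : ∀ z ∈ l, z ∈ h.addImage hσ hN) : l.prod ∈ N := by
  choose! x hxN hx using fun z hz ↦ (h.mem_addImage hσ hN).1 (hl z hz)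
  have hcong : N.ringCon (l.map id).prod (l.map (δ ∘ x)).prod :=
    N.ringCon.toCon.list_prod fun z hz ↦ (N.rel_iff _ _).2 (hx z hz)
  rw [List.map_id, N.rel_iff, ← List.map_map] at hcong
  obtain ⟨l', hlen', hl'N, w, hw⟩ :=
    h.exists_prod_map_eq_smul_twistedProd hN' (l := l.map x) (by simpa using hxN)
  rw [List.length_map, hlen] at hlen'
  have hδprod : ((l.map x).map δ).prod ∈ N := by
    rw [hw, Algebra.smul_def]
    exact N.mul_mem_left _ _ (h.twistedProd_mem hN hl'N (hlen' ▸ hNm) (hlen' ▸ hq))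
  simpa using N.add_mem hcong hδprod

end IsQSkewDerivation

theorem stmt_6_general {k : Type*} [Field k] {R : Type*} [Ring R] [Algebra k R]
    (q : k)
    (σ : R →+* R) (hσ : Function.Bijective σ)
    (δ : R → R) (hδadd : ∀ a b : R, δ (a + b) = δ a + δ b)
    (hleib : ∀ a b : R, δ (a * b) = δ a * b + σ a * δ b)
    (hqskew : ∀ x : R, δ (σ x) = algebraMap k R q * σ (δ x))
    (hσq : σ (algebraMap k R q) = algebraMap k R q)
    (hδq : δ (algebraMap k R q) = 0)
    (hroot : (¬ ∃ m : ℕ, 0 < m ∧ q ^ m = 1) ∨ (CharZero k ∧ q = 1))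
    (N : TwoSidedIdeal R)
    -- `N` is nilpotent:
    (hnilp : ∃ m : ℕ, 0 < m ∧ ∀ l : List R, l.length = m → (∀ y ∈ l, y ∈ N) → l.prod = 0)
    -- and contains every nilpotent two-sided ideal of `R`:
    (hlargest : ∀ (J : TwoSidedIdeal R) (m : ℕ), 0 < m →
      (∀ l : List R, l.length = m → (∀ y ∈ l, y ∈ J) → l.prod = 0) → J ≤ N) :
    ∀ x ∈ N, δ x ∈ N := by
  obtain ⟨m, hm, hNm⟩ := hnilp
  have h : IsQSkewDerivation q σ (AddMonoidHom.mk' δ hδadd) :=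
    ⟨hleib, fun x ↦ by simpa [Algebra.smul_def] using hqskew x, hσq, hδq⟩
  let e := RingEquiv.ofBijective σ hσ
  have hmaps : Set.MapsTo σ N N := fun x hx ↦
    TwoSidedIdeal.map_mem_of_forall_powEqZero_le hm hNm hlargest e hx
  have hsurj : Set.SurjOn σ N N := fun x hx ↦
    ⟨e.symm x, TwoSidedIdeal.map_mem_of_forall_powEqZero_le hm hNm hlargest e.symm hx,
      e.apply_symm_apply x⟩
  have hq : IsUnit (qFactorial q m) := (qFactorial_ne_zero q (geom_sum_succ_ne_zero hroot) m).isUnit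
  have hJ : h.addImage hσ.2 hmaps ≤ N := hlargest _ (m * m) (Nat.mul_pos hm hm)
    (TwoSidedIdeal.PowEqZero.mul
      (fun _ hlen hl ↦ h.prod_mem_of_mem_addImage hσ.2 hmaps hsurj hNm hq hlen hl) hNm)
  intro x hx
  exact hJ ((h.mem_addImage hσ.2 hmaps).2 ⟨x, hx, by simp⟩)

/-- Let `k` be a field, `R` a Noetherian `k`-algebra, `q ∈ k` nonzero, and `(σ, δ)` a
`q`-skew derivation on `R` (with `q` regarded as the central element `q·1 ∈ R`).  If `q`
is not a root of unity, or `k` has characteristic `0` and `q = 1`, then `δ(N) ⊆ N`,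
where `N` is the prime radical of `R` (its largest nilpotent two-sided ideal). -/
theorem stmt_6 {k : Type*} [Field k] {R : Type*} [Ring R] [Algebra k R]
    [IsNoetherianRing R]
    (q : k) (hq : q ≠ 0)
    (σ : R →+* R) (hσ : Function.Bijective σ)
    (δ : R → R) (hδadd : ∀ a b : R, δ (a + b) = δ a + δ b)
    (hleib : ∀ a b : R, δ (a * b) = δ a * b + σ a * δ b)
    (hqskew : ∀ x : R, δ (σ x) = algebraMap k R q * σ (δ x))
    (hσq : σ (algebraMap k R q) = algebraMap k R q)
    (hδq : δ (algebraMap k R q) = 0)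
    (hroot : (¬ ∃ m : ℕ, 0 < m ∧ q ^ m = 1) ∨ (CharZero k ∧ q = 1))
    (N : TwoSidedIdeal R)
    -- `N` is nilpotent:
    (hnilp : ∃ m : ℕ, 0 < m ∧ ∀ l : List R, l.length = m → (∀ y ∈ l, y ∈ N) → l.prod = 0)
    -- and contains every nilpotent two-sided ideal of `R`:
    (hlargest : ∀ (J : TwoSidedIdeal R) (m : ℕ), 0 < m →
      (∀ l : List R, l.length = m → (∀ y ∈ l, y ∈ J) → l.prod = 0) → J ≤ N) :
    ∀ x ∈ N, δ x ∈ N :=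
  stmt_6_general q σ hσ δ hδadd hleib hqskew hσq hδq hroot N hnilp hlargest
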